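/- arXiv:math/0111122 — 4 statements merged into one kernel-verified Lean document; each statement's English description precedes it below -/
import Mathlib

section
/- Let H be a complex Hilbert space, let A be a subalgebra of B(H), and suppose A has a right contractive approximate identity. Let K be the closure in H of the linear span of {a ζ : a ∈ A, ζ ∈ H}. Then for every a ∈ A, ‖a‖ = sup{‖a ζ‖ : ζ ∈ K, ‖ζ‖ ≤ 1}; in particular, if a ∈ A satisfies a ζ = 0 for all ζ ∈ K, then a = 0. (That is, the restriction of A to the invariant subspace K is isometric and one-to-one.) -/
open Filter Topology

/-- Part of Lemma 1.1: if `A ⊆ B(H)` is a subalgebra with a right contractive approximate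
identity and `K` is the closed linear span of `A H`, then the restriction of each `a ∈ A`
to `K` has the same norm as `a` (and in particular the restriction map is one-to-one). -/
theorem stmt3 {H : Type*} [NormedAddCommGroup H] [InnerProductSpace ℂ H] [CompleteSpace H]
    {ι : Type*} [Preorder ι] [IsDirected ι (· ≤ ·)] [Nonempty ι]
    (A : NonUnitalSubalgebra ℂ (H →L[ℂ] H))
    (e : ι → H →L[ℂ] H) (heA : ∀ i, e i ∈ A) (he : ∀ i, ‖e i‖ ≤ 1)
    (hrcai : ∀ a ∈ A, Tendsto (fun i => ‖a * e i - a‖) atTop (𝓝 0))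
    (K : Set H)
    (hK : K = closure (Submodule.span ℂ {x : H | ∃ a ∈ A, ∃ ζ : H, x = a ζ} : Set H)) :
    (∀ a ∈ A, ‖a‖ = sSup {r : ℝ | ∃ ζ ∈ K, ‖ζ‖ ≤ 1 ∧ r = ‖a ζ‖}) ∧
      (∀ a ∈ A, (∀ ζ ∈ K, a ζ = 0) → a = 0) := by
  have hmem : ∀ b ∈ A, ∀ ζ : H, b ζ ∈ K := by
    intro b hb ζ
    rw [hK]
    exact subset_closure (Submodule.subset_span ⟨b, hb, ζ, rfl⟩)
  have h0K : (0 : H) ∈ K := by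
    rw [hK]; exact subset_closure (Submodule.zero_mem _)
  have key : ∀ a ∈ A, ‖a‖ = sSup {r : ℝ | ∃ ζ ∈ K, ‖ζ‖ ≤ 1 ∧ r = ‖a ζ‖} := by
    intro a ha
    set S : Set ℝ := {r : ℝ | ∃ ζ ∈ K, ‖ζ‖ ≤ 1 ∧ r = ‖a ζ‖} with hS
    have h0S : (0 : ℝ) ∈ S := ⟨0, h0K, by simp, by simp⟩
    have hbdd : BddAbove S := by
      refine ⟨‖a‖, ?_⟩
      rintro r ⟨ζ, hζK, hζ1, rfl⟩
      calc ‖a ζ‖ ≤ ‖a‖ * ‖ζ‖ := a.le_opNorm ζ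
        _ ≤ ‖a‖ * 1 := by gcongr
        _ = ‖a‖ := mul_one _
    have hsup0 : (0 : ℝ) ≤ sSup S := le_csSup hbdd h0S
    have hle : sSup S ≤ ‖a‖ := by
      apply csSup_le ⟨0, h0S⟩
      rintro r ⟨ζ, hζK, hζ1, rfl⟩
      calc ‖a ζ‖ ≤ ‖a‖ * ‖ζ‖ := a.le_opNorm ζ
        _ ≤ ‖a‖ * 1 := by gcongr
        _ = ‖a‖ := mul_one _
    -- for unit vectors ζ (in all of H!), ‖a ζ‖ ≤ sSup S
    have hunit : ∀ ζ : H, ‖ζ‖ ≤ 1 → ‖a ζ‖ ≤ sSup S := by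
      intro ζ hζ
      refine le_of_forall_pos_le_add ?_
      intro ε hε
      obtain ⟨i, hi⟩ := ((hrcai a ha).eventually (gt_mem_nhds hε)).exists
      have h1 : ‖a ζ - (a * e i) ζ‖ ≤ ε := by
        have := (a - a * e i).le_opNorm ζ
        calc ‖a ζ - (a * e i) ζ‖ = ‖(a - a * e i) ζ‖ := by simp
          _ ≤ ‖a - a * e i‖ * ‖ζ‖ := (a - a * e i).le_opNorm ζ
          _ ≤ ‖a - a * e i‖ * 1 := by gcongr
          _ = ‖a * e i - a‖ := by rw [mul_one, norm_sub_rev]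
          _ ≤ ε := le_of_lt hi
      have h2 : ‖(a * e i) ζ‖ ≤ sSup S := by
        have hKi : e i ζ ∈ K := hmem (e i) (heA i) ζ
        have hn : ‖e i ζ‖ ≤ 1 := by
          calc ‖e i ζ‖ ≤ ‖e i‖ * ‖ζ‖ := (e i).le_opNorm ζ
            _ ≤ 1 * 1 := mul_le_mul (he i) hζ (norm_nonneg _) zero_le_one
            _ = 1 := one_mul 1
        have : ‖a (e i ζ)‖ ∈ S := ⟨e i ζ, hKi, hn, rfl⟩
        have := le_csSup hbdd this
        simpa [ContinuousLinearMap.mul_apply] using this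
      calc ‖a ζ‖ ≤ ‖(a * e i) ζ‖ + ‖a ζ - (a * e i) ζ‖ := by
            have := norm_add_le ((a * e i) ζ) (a ζ - (a * e i) ζ)
            simpa using this
        _ ≤ sSup S + ε := add_le_add h2 h1
    have hge : ‖a‖ ≤ sSup S := by
      refine a.opNorm_le_bound hsup0 ?_
      intro x
      rcases eq_or_ne x 0 with rfl | hx
      · simp
      · have hxpos : (0 : ℝ) < ‖x‖ := norm_pos_iff.mpr hx
        have hun : ‖(‖x‖⁻¹ : ℝ) • x‖ ≤ 1 := by
          rw [norm_smul, norm_inv, norm_norm]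
          rw [inv_mul_cancel₀ hxpos.ne']
        have := hunit ((‖x‖⁻¹ : ℝ) • x) hun
        rw [a.map_smul_of_tower, norm_smul, norm_inv, norm_norm] at this
        have h' : ‖x‖⁻¹ * ‖a x‖ ≤ sSup S := by simpa using this
        calc ‖a x‖ = ‖x‖ * (‖x‖⁻¹ * ‖a x‖) := by
              field_simp
            _ ≤ ‖x‖ * sSup S := by gcongr
            _ = sSup S * ‖x‖ := mul_comm _ _
    linarith
  refine ⟨key, ?_⟩
  intro a ha hzero
  have h1 : ‖a‖ = sSup {r : ℝ | ∃ ζ ∈ K, ‖ζ‖ ≤ 1 ∧ r = ‖a ζ‖} := key a ha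
  have h2 : {r : ℝ | ∃ ζ ∈ K, ‖ζ‖ ≤ 1 ∧ r = ‖a ζ‖} = {0} := by
    ext r
    constructor
    · rintro ⟨ζ, hζK, hζ1, rfl⟩
      simp [hzero ζ hζK]
    · rintro rfl
      exact ⟨0, h0K, by simp, by simp⟩
  rw [h2, csSup_singleton] at h1
  exact norm_eq_zero.mp h1
end

section
/- Let H be a complex Hilbert space, let A be a norm-closed subalgebra of B(H), and let (e_i) be a right contractive approximate identity for A. Let T be the triple system generated by A in B(H). Then for every x ∈ T, ‖x e_i − x‖ → 0 and ‖x e_i* − x‖ → 0. (In particular (e_i) is a right contractive approximate identity for T.) -/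
/-!
For a bounded net `(e i)`, the `x` with `x * e i → x` form a closed left ideal, hence a closed
subspace containing `x y* z` whenever it contains `z`. In a C⋆-algebra a contraction `f` satisfies
`‖a f* - a‖² ≤ 2 ‖a f - a‖ ‖a‖` (since `a f* f a* ≤ a a*`), so on `A` the net `(e i)*` is a right
approximate identity too. The `x` fixed approximately by both nets therefore form a closed triple
system containing `A`, hence containing `T`.
-/

open Filter Topology NNReal

section ApproxRightFixed

variable (𝕜 : Type*) {R ι : Type*} [NormedField 𝕜] [NonUnitalSeminormedRing R] [NormedSpace 𝕜 R]
  [IsScalarTower 𝕜 R R] (l : Filter ι) (e : ι → R)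

def approxRightFixed : Submodule 𝕜 R where
  carrier := {x | Tendsto (fun i => x * e i) l (𝓝 x)}
  add_mem' hx hy := by simpa only [Set.mem_ofPred_eq, add_mul] using hx.add hy
  zero_mem' := by simpa only [Set.mem_ofPred_eq, zero_mul] using tendsto_const_nhds
  smul_mem' c _ hx := by simpa only [Set.mem_ofPred_eq, smul_mul_assoc] using hx.const_smul c

variable {𝕜 l e}

lemma mem_approxRightFixed {x : R} :
    x ∈ approxRightFixed 𝕜 l e ↔ Tendsto (fun i => x * e i) l (𝓝 x) := Iff.rfl

lemma mul_mem_approxRightFixed (y : R) {x : R} (hx : x ∈ approxRightFixed 𝕜 l e) :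
    y * x ∈ approxRightFixed 𝕜 l e := by
  simpa only [mem_approxRightFixed, mul_assoc] using hx.const_mul y

lemma isClosed_approxRightFixed {C : ℝ≥0} (he : ∀ i, ‖e i‖₊ ≤ C) :
    IsClosed (approxRightFixed 𝕜 l e : Set R) := by
  have hlip : ∀ i, LipschitzWith C (fun x : R => x * e i) := fun i =>
    LipschitzWith.of_dist_le_mul fun x y => by
      rw [dist_eq_norm, dist_eq_norm, ← sub_mul, mul_comm (C : ℝ)]
      exact (norm_mul_le _ _).trans (by gcongr; exact he i)
  exact (LipschitzWith.uniformEquicontinuous _ C hlip).equicontinuous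
    |>.isClosed_setOfPred_tendsto continuous_id

end ApproxRightFixed

section CStarAlgebra

variable {A : Type*} [NonUnitalCStarAlgebra A] [PartialOrder A] [StarOrderedRing A]

lemma CStarAlgebra.norm_mul_star_sub_self_sq_le (a f : A) (hf : ‖f‖ ≤ 1) :
    ‖a * star f - a‖ ^ 2 ≤ 2 * ‖a * f - a‖ * ‖a‖ := by
  set d := a * star f - a
  set Y := (a - a * f) * star a + a * star (a - a * f)
  have hconj : a * (star f * f) * star a ≤ a * star a :=
    calc a * (star f * f) * star a ≤ ‖star f * f‖ • (a * star a) :=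
          CStarAlgebra.star_right_conjugate_le_norm_smul
      _ ≤ a * star a := smul_le_of_le_one_left (mul_star_self_nonneg a) <| by
          rw [CStarRing.norm_star_mul_self]; nlinarith [norm_nonneg f]
  have hdY : d * star d ≤ Y := by
    have : Y - d * star d = a * star a - a * (star f * f) * star a := by
      simp only [d, Y, star_sub, star_mul, star_star]; noncomm_ring
    exact sub_nonneg.1 (this ▸ sub_nonneg.2 hconj)
  calc ‖d‖ ^ 2 = ‖d * star d‖ := by rw [CStarRing.norm_self_mul_star, sq]
    _ ≤ ‖Y‖ := CStarAlgebra.norm_le_norm_of_nonneg_of_le (mul_star_self_nonneg d) hdY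
    _ ≤ ‖a - a * f‖ * ‖a‖ + ‖a‖ * ‖a - a * f‖ := by
        refine (norm_add_le _ _).trans (add_le_add ?_ ?_)
        · simpa only [norm_star] using norm_mul_le (a - a * f) (star a)
        · simpa only [norm_star] using norm_mul_le a (star (a - a * f))
    _ = 2 * ‖a * f - a‖ * ‖a‖ := by rw [norm_sub_rev]; ring

lemma CStarAlgebra.tendsto_mul_star_of_tendsto_mul {ι : Type*} {l : Filter ι} {e : ι → A}
    (he : ∀ i, ‖e i‖ ≤ 1) {a : A} (ha : Tendsto (fun i => a * e i) l (𝓝 a)) :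
    Tendsto (fun i => a * star (e i)) l (𝓝 a) := by
  rw [tendsto_iff_norm_sub_tendsto_zero] at ha ⊢
  have hbound : Tendsto (fun i => √(2 * ‖a * e i - a‖ * ‖a‖)) l (𝓝 0) := by
    simpa using ((ha.const_mul 2).mul_const ‖a‖).sqrt
  refine squeeze_zero (fun _ => norm_nonneg _) (fun i => ?_) hbound
  exact Real.le_sqrt_of_sq_le (norm_mul_star_sub_self_sq_le a (e i) (he i))

end CStarAlgebra

theorem stmt5_general {H : Type*} [NormedAddCommGroup H] [InnerProductSpace ℂ H] [CompleteSpace H]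
    {ι : Type*} [Preorder ι]
    (A : NonUnitalSubalgebra ℂ (H →L[ℂ] H))
    (e : ι → H →L[ℂ] H) (he : ∀ i, ‖e i‖ ≤ 1)
    (hrcai : ∀ a ∈ A, Tendsto (fun i => ‖a * e i - a‖) atTop (𝓝 0))
    (T : Submodule ℂ (H →L[ℂ] H))
    (hTmin : ∀ S : Submodule ℂ (H →L[ℂ] H), IsClosed (S : Set (H →L[ℂ] H)) →
      (A : Set (H →L[ℂ] H)) ⊆ S →
      (∀ x ∈ S, ∀ y ∈ S, ∀ z ∈ S, x * star y * z ∈ S) → T ≤ S) :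
    ∀ x ∈ T, Tendsto (fun i => ‖x * e i - x‖) atTop (𝓝 0) ∧
      Tendsto (fun i => ‖x * star (e i) - x‖) atTop (𝓝 0) := by
  simp only [← tendsto_iff_norm_sub_tendsto_zero] at hrcai ⊢
  have hnnorm : ∀ i, ‖e i‖₊ ≤ 1 := he
  have hTS := hTmin (approxRightFixed ℂ atTop e ⊓ approxRightFixed ℂ atTop (star e))
    ((isClosed_approxRightFixed hnnorm).inter
      (isClosed_approxRightFixed (fun i => (nnnorm_star (e i)).trans_le (hnnorm i))))
    (fun a ha => ⟨hrcai a ha, CStarAlgebra.tendsto_mul_star_of_tendsto_mul he (hrcai a ha)⟩)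
    (fun x _ y _ z hz => ⟨mul_mem_approxRightFixed _ hz.1, mul_mem_approxRightFixed _ hz.2⟩)
  exact fun x hx => hTS hx

/-- If `A ⊆ B(H)` is a norm-closed subalgebra with right contractive approximate identity
`(e i)`, and `T` is the triple system generated by `A` in `B(H)` (the smallest norm-closed
subspace containing `A` and closed under `x y* z`), then `x e i → x` and `x (e i)* → x` for
every `x ∈ T`; in particular `(e i)` is a r.c.a.i. for `T`. -/
theorem stmt5 {H : Type*} [NormedAddCommGroup H] [InnerProductSpace ℂ H] [CompleteSpace H]
    {ι : Type*} [Preorder ι] [IsDirected ι (· ≤ ·)] [Nonempty ι]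
    (A : NonUnitalSubalgebra ℂ (H →L[ℂ] H)) (hA : IsClosed (A : Set (H →L[ℂ] H)))
    (e : ι → H →L[ℂ] H) (heA : ∀ i, e i ∈ A) (he : ∀ i, ‖e i‖ ≤ 1)
    (hrcai : ∀ a ∈ A, Tendsto (fun i => ‖a * e i - a‖) atTop (𝓝 0))
    (T : Submodule ℂ (H →L[ℂ] H)) (hTc : IsClosed (T : Set (H →L[ℂ] H)))
    (hAT : (A : Set (H →L[ℂ] H)) ⊆ T)
    (hTtriple : ∀ x ∈ T, ∀ y ∈ T, ∀ z ∈ T, x * star y * z ∈ T)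
    (hTmin : ∀ S : Submodule ℂ (H →L[ℂ] H), IsClosed (S : Set (H →L[ℂ] H)) →
      (A : Set (H →L[ℂ] H)) ⊆ S →
      (∀ x ∈ S, ∀ y ∈ S, ∀ z ∈ S, x * star y * z ∈ S) → T ≤ S) :
    ∀ x ∈ T, Tendsto (fun i => ‖x * e i - x‖) atTop (𝓝 0) ∧
      Tendsto (fun i => ‖x * star (e i) - x‖) atTop (𝓝 0) :=
  stmt5_general A e he hrcai T hTmin
end

section
/- Let A be the linear span in M₃(ℂ) of the matrix units E₁₂, E₁₃, E₂₂, E₃₃, regarded as a (non-unital) complex algebra under matrix multiplication. Then the complex vector space of all linear maps T : A → A satisfying T(a b) = T(a) b for all a, b ∈ A (the right A-module endomorphisms of A) has dimension 8. (In particular this space is strictly larger than the 5-dimensional left idealizer of A in M₃(ℂ).) -/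
open Matrix

noncomputable def E3 (i j : Fin 3) : Matrix (Fin 3) (Fin 3) ℂ := Matrix.single i j 1

noncomputable def Aex : Submodule ℂ (Matrix (Fin 3) (Fin 3) ℂ) :=
  Submodule.span ℂ {E3 0 1, E3 0 2, E3 1 1, E3 2 2}

noncomputable def rightModEnd : Submodule ℂ (↥Aex →ₗ[ℂ] ↥Aex) where
  carrier := {T | ∀ (a b : ↥Aex)
    (h : (a : Matrix (Fin 3) (Fin 3) ℂ) * (b : Matrix (Fin 3) (Fin 3) ℂ) ∈ Aex),
    ((T ⟨(a : Matrix (Fin 3) (Fin 3) ℂ) * (b : Matrix (Fin 3) (Fin 3) ℂ), h⟩ : ↥Aex) :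
        Matrix (Fin 3) (Fin 3) ℂ) =
      ((T a : ↥Aex) : Matrix (Fin 3) (Fin 3) ℂ) * (b : Matrix (Fin 3) (Fin 3) ℂ)}
  add_mem' := by
    intro T S hT hS a b h
    simp only [LinearMap.add_apply, Submodule.coe_add, hT a b h, hS a b h, add_mul]
  zero_mem' := by
    intro a b h
    simp
  smul_mem' := by
    intro c T hT a b h
    simp only [LinearMap.smul_apply, Submodule.coe_smul, hT a b h, smul_mul_assoc]

noncomputable instance : AddCommGroup ↥rightModEnd :=
  @Submodule.addCommGroup ℂ (↥Aex →ₗ[ℂ] ↥Aex) _ _ _ rightModEnd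

noncomputable instance : Module ℂ ↥rightModEnd :=
  @Submodule.module ℂ (↥Aex →ₗ[ℂ] ↥Aex) _ _ _ rightModEnd

/-!
Write `e` for right multiplication by `E₂₂` (`E3 1 1`) on `A`. Every `a ∈ A` has zero first
column, so each `b ∈ A` acts on `A` from the right as `b₂₂ e + b₃₃ (1 - e)`. Hence the right
`A`-module maps are exactly the endomorphisms of `A` commuting with the idempotent `e`, that is,
those preserving both its range `span {E₁₂, E₂₂}` and its kernel `span {E₁₃, E₃₃}`. They form
`End ℂ² × End ℂ²`, of dimension `4 + 4`.
-/

namespace LinearMap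

variable {R M₁ M₂ : Type*} [CommSemiring R] [AddCommMonoid M₁] [Module R M₁]
  [AddCommMonoid M₂] [Module R M₂]

theorem commute_prodMap_id_zero_iff (T : Module.End R (M₁ × M₂)) :
    Commute T (prodMap id 0) ↔ T ∈ range (prodMapLinear R M₁ M₂ M₁ M₂ R) := by
  constructor
  · intro h
    have hP (v : M₁ × M₂) : T (v.1, 0) = ((T v).1, 0) := LinearMap.congr_fun h.eq v
    refine ⟨(fst R M₁ M₂ ∘ₗ T ∘ₗ inl R M₁ M₂, snd R M₁ M₂ ∘ₗ T ∘ₗ inr R M₁ M₂), ?_⟩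
    ext x
    · simp
    · simpa [Prod.mk_zero_zero] using (congrArg Prod.snd (hP (x, 0))).symm
    · simpa [Prod.mk_zero_zero] using congrArg Prod.fst (hP (0, x))
    · simp
  · rintro ⟨⟨S₁, S₂⟩, rfl⟩
    ext <;> simp

theorem injective_prodMapLinear :
    Function.Injective (prodMapLinear R M₁ M₂ M₁ M₂ R) := by
  rintro ⟨f₁, f₂⟩ ⟨g₁, g₂⟩ h
  simp only [prodMapLinear_apply] at h
  ext x
  · exact congrArg Prod.fst (LinearMap.congr_fun h (x, 0))
  · exact congrArg Prod.snd (LinearMap.congr_fun h (0, x))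

theorem finrank_range_prodMapLinear {K V₁ V₂ : Type*} [Field K] [AddCommGroup V₁] [Module K V₁]
    [AddCommGroup V₂] [Module K V₂] [FiniteDimensional K V₁] [FiniteDimensional K V₂] :
    Module.finrank K (range (prodMapLinear K V₁ V₂ V₁ V₂ K)) =
      Module.finrank K V₁ ^ 2 + Module.finrank K V₂ ^ 2 := by
  rw [finrank_range_of_inj injective_prodMapLinear, Module.finrank_prod,
    Module.finrank_linearMap, Module.finrank_linearMap, sq, sq]

end LinearMap

theorem LinearEquiv.commute_conj_symm_iff {R M N : Type*} [CommSemiring R] [AddCommMonoid M]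
    [Module R M] [AddCommMonoid N] [Module R N] (e : M ≃ₗ[R] N) (f : Module.End R N)
    (g : Module.End R M) : Commute (e.conj.symm f) g ↔ Commute f (e.conj g) := by
  rw [← commute_map_iff (e.conjAlgEquiv R).injective]
  change Commute (e.conj (e.conj.symm f)) (e.conj g) ↔ _
  rw [LinearEquiv.apply_symm_apply]

theorem mem_Aex_iff (x : Matrix (Fin 3) (Fin 3) ℂ) :
    x ∈ Aex ↔ x 0 0 = 0 ∧ x 1 0 = 0 ∧ x 2 0 = 0 ∧ x 1 2 = 0 ∧ x 2 1 = 0 := by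
  constructor
  · intro hx
    induction hx using Submodule.span_induction with
    | mem y hy =>
      rcases hy with rfl | rfl | rfl | rfl <;> simp [E3, Matrix.single]
    | zero => simp
    | add y z _ _ hy hz => simp_all
    | smul c y _ hy => simp_all
  · rintro ⟨h00, h10, h20, h12, h21⟩
    have hx : x = x 0 1 • E3 0 1 + x 0 2 • E3 0 2 + x 1 1 • E3 1 1 + x 2 2 • E3 2 2 := by
      ext i j
      fin_cases i <;> fin_cases j <;> simp [E3, Matrix.single, *]
    rw [hx]
    refine add_mem (add_mem (add_mem ?_ ?_) ?_) ?_ <;>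
      exact Submodule.smul_mem _ _ (Submodule.subset_span (by simp))

theorem mul_mem_Aex {a b : Matrix (Fin 3) (Fin 3) ℂ} (ha : a ∈ Aex) (hb : b ∈ Aex) :
    a * b ∈ Aex := by
  rw [mem_Aex_iff] at *
  simp [Matrix.mul_apply, Fin.sum_univ_three, *]

theorem mul_eq_of_mem_Aex {a b : Matrix (Fin 3) (Fin 3) ℂ} (ha : a ∈ Aex) (hb : b ∈ Aex) :
    a * b = b 1 1 • (a * E3 1 1) + b 2 2 • (a - a * E3 1 1) := by
  rw [mem_Aex_iff] at ha hb
  ext i j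
  fin_cases i <;> fin_cases j <;>
    simp [Matrix.mul_apply, Fin.sum_univ_three, E3, Matrix.single, mul_comm, *]

theorem E3_one_one_mem_Aex : E3 1 1 ∈ Aex :=
  Submodule.subset_span (by simp)

noncomputable def rightMulE11 : Module.End ℂ Aex :=
  (LinearMap.mulRight ℂ (E3 1 1)).restrict fun _ hx ↦ mul_mem_Aex hx E3_one_one_mem_Aex

theorem coe_rightMulE11_apply (x : Aex) :
    (rightMulE11 x : Matrix (Fin 3) (Fin 3) ℂ) = x * E3 1 1 :=
  rfl

theorem mem_rightModEnd_iff_commute (T : Module.End ℂ Aex) :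
    T ∈ rightModEnd ↔ Commute T rightMulE11 := by
  constructor
  · intro hT
    refine LinearMap.ext fun x ↦ Subtype.ext ?_
    exact hT x ⟨E3 1 1, E3_one_one_mem_Aex⟩ (mul_mem_Aex x.2 E3_one_one_mem_Aex)
  · intro hT a b hab
    have hcomm (x : Aex) :
        ((T (rightMulE11 x) : Aex) : Matrix (Fin 3) (Fin 3) ℂ) = T x * E3 1 1 :=
      congrArg Subtype.val (LinearMap.congr_fun hT.eq x)
    have hdecomp :
        (⟨a * b, hab⟩ : Aex) = b.1 1 1 • rightMulE11 a + b.1 2 2 • (a - rightMulE11 a) :=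
      Subtype.ext (mul_eq_of_mem_Aex a.2 b.2)
    rw [hdecomp, map_add, map_smul, map_smul, map_sub]
    simp only [Submodule.coe_add, Submodule.coe_smul, Submodule.coe_sub, hcomm]
    exact (mul_eq_of_mem_Aex (T a).2 b.2).symm

noncomputable def aexEquivProd : Aex ≃ₗ[ℂ] (Fin 2 → ℂ) × (Fin 2 → ℂ) where
  toFun x := (![x.1 0 1, x.1 1 1], ![x.1 0 2, x.1 2 2])
  invFun p := ⟨!![0, p.1 0, p.2 0; 0, p.1 1, 0; 0, 0, p.2 1], by simp [mem_Aex_iff]⟩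
  map_add' x y := by ext i <;> fin_cases i <;> rfl
  map_smul' c x := by ext i <;> fin_cases i <;> rfl
  left_inv x := by
    obtain ⟨h00, h10, h20, h12, h21⟩ := (mem_Aex_iff x.1).1 x.2
    ext i j
    fin_cases i <;> fin_cases j <;> simp [*]
  right_inv p := by ext i <;> fin_cases i <;> rfl

theorem conj_rightMulE11 :
    aexEquivProd.conj rightMulE11 = LinearMap.prodMap LinearMap.id 0 := by
  ext p i <;> fin_cases i <;>
    simp [aexEquivProd, coe_rightMulE11_apply, Matrix.mul_apply, E3, Matrix.single]

theorem map_conj_rightModEnd :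
    rightModEnd.map (aexEquivProd.conj : Module.End ℂ Aex →ₗ[ℂ] _) =
      LinearMap.range
        (LinearMap.prodMapLinear ℂ (Fin 2 → ℂ) (Fin 2 → ℂ) (Fin 2 → ℂ) (Fin 2 → ℂ) ℂ) := by
  ext T
  rw [Submodule.mem_map_equiv, mem_rightModEnd_iff_commute,
    ← LinearMap.commute_prodMap_id_zero_iff, ← conj_rightMulE11,
    LinearEquiv.commute_conj_symm_iff]

/-- Example 3.4: the space `CB_A(A)` of right `A`-module maps on `A` is 8-dimensional
(in particular strictly larger than the 5-dimensional left idealizer of `A` in `M₃(ℂ)`). -/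
theorem stmt15 : Module.finrank ℂ ↥rightModEnd = 8 := by
  refine (LinearEquiv.finrank_map_eq aexEquivProd.conj rightModEnd).symm.trans ?_
  rw [map_conj_rightModEnd, LinearMap.finrank_range_prodMapLinear, Module.finrank_fin_fun]
  norm_num
end

section
/- Let A be the linear span in M₃(ℂ) of the matrix units E₁₂, E₁₃, E₂₂, E₃₃. Then the smallest linear subspace S of M₃(ℂ) containing A and satisfying x y* z ∈ S for all x, y, z ∈ S equals the set of all 3×3 complex matrices whose first column is zero; in particular S is 6-dimensional (a copy of M_{3,2}). -/
/-!
Matrices with zero first column form a left ideal, hence a triple subsystem containing `A`,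
so minimality puts `S` inside it. Conversely the triple products `E₂₂ E₁₂* E₁₃ = E₂₃` and
`E₃₃ E₁₃* E₁₂ = E₃₂` give all six matrix units `E_ik` with `k ≠ 1` in `S`, and these span.
(Lean indices start at `0`, so `E₂₃` is `E3 1 2`.)
-/

open Matrix

namespace Matrix

variable {R m n : Type*}

def IsTripleSubsystem [Semiring R] [StarRing R] [Fintype n]
    (S : Submodule R (Matrix n n R)) : Prop :=
  ∀ x ∈ S, ∀ y ∈ S, ∀ z ∈ S, x * star y * z ∈ S

section ZeroCol

variable [Semiring R]

variable (R m) in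
def colLinearMap (j : n) : Matrix m n R →ₗ[R] (m → R) where
  toFun x i := x i j
  map_add' _ _ := rfl
  map_smul' _ _ := rfl

variable (R m) in
def zeroColSubmodule (j : n) : Submodule R (Matrix m n R) :=
  LinearMap.ker (colLinearMap R m j)

theorem mem_zeroColSubmodule {j : n} {x : Matrix m n R} :
    x ∈ zeroColSubmodule R m j ↔ ∀ i, x i j = 0 :=
  funext_iff

theorem single_mem_zeroColSubmodule [DecidableEq m] [DecidableEq n] {j k : n} (hk : k ≠ j)
    (i : m) (a : R) : single i k a ∈ zeroColSubmodule R m j :=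
  mem_zeroColSubmodule.2 fun _ => single_apply_of_col_ne _ _ hk _

theorem colLinearMap_surjective [DecidableEq n] (j : n) :
    Function.Surjective (colLinearMap R m j) :=
  fun v => ⟨of fun i k => if k = j then v i else 0, funext fun _ => if_pos rfl⟩

theorem mul_mem_zeroColSubmodule [Fintype m] {j : n} (x : Matrix m m R) {z : Matrix m n R}
    (hz : z ∈ zeroColSubmodule R m j) : x * z ∈ zeroColSubmodule R m j :=
  mem_zeroColSubmodule.2 fun i => by simp [mul_apply, mem_zeroColSubmodule.1 hz]

theorem zeroColSubmodule_isTripleSubsystem [StarRing R] [Fintype n] (j : n) :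
    IsTripleSubsystem (zeroColSubmodule R n j) :=
  fun x _ y _ _ hz => mul_mem_zeroColSubmodule (x * star y) hz

theorem zeroColSubmodule_le_of_single_mem [Fintype m] [Fintype n] [DecidableEq m]
    [DecidableEq n] {j : n} {S : Submodule R (Matrix m n R)}
    (h : ∀ i k, k ≠ j → single i k 1 ∈ S) : zeroColSubmodule R m j ≤ S := by
  intro x hx
  rw [matrix_eq_sum_single x]
  refine Submodule.sum_mem _ fun i _ => Submodule.sum_mem _ fun k _ => ?_
  by_cases hk : k = j
  · rw [hk, mem_zeroColSubmodule.1 hx i, single_zero]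
    exact S.zero_mem
  · simpa [smul_single] using S.smul_mem (x i k) (h i k hk)

end ZeroCol

theorem finrank_zeroColSubmodule [Field R] [Fintype m] [Fintype n] [DecidableEq n] (j : n) :
    Module.finrank R (zeroColSubmodule R m j) = Fintype.card m * (Fintype.card n - 1) := by
  have h := LinearMap.finrank_range_add_finrank_ker (colLinearMap R m j)
  rw [LinearMap.range_eq_top.2 (colLinearMap_surjective j), finrank_top,
    Module.finrank_matrix, Module.finrank_self, mul_one,
    Module.finrank_fintype_fun_eq_card] at h
  rw [zeroColSubmodule, Nat.mul_sub_one]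
  omega

theorem single_mul_star_single_mul_single [Semiring R] [StarRing R] [Fintype n]
    [DecidableEq n] (i j k p : n) :
    single i j (1 : R) * star (single k j 1) * single k p 1 = single i p 1 := by
  simp [star_eq_conjTranspose]

end Matrix

theorem Aex_le_zeroColSubmodule : Aex ≤ zeroColSubmodule ℂ (Fin 3) 0 := by
  refine Submodule.span_le.2 ?_
  rintro _ (rfl | rfl | rfl | rfl) <;> exact single_mem_zeroColSubmodule (by decide) _ _

theorem zeroColSubmodule_le_of_Aex_le {S : Submodule ℂ (Matrix (Fin 3) (Fin 3) ℂ)}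
    (hAS : Aex ≤ S) (hS : IsTripleSubsystem S) : zeroColSubmodule ℂ (Fin 3) 0 ≤ S := by
  obtain ⟨h01, h02, h11, h22⟩ : E3 0 1 ∈ S ∧ E3 0 2 ∈ S ∧ E3 1 1 ∈ S ∧ E3 2 2 ∈ S := by
    simpa only [Set.insert_subset_iff, Set.singleton_subset_iff, SetLike.mem_coe] using
      Submodule.span_le.1 hAS
  have h12 : E3 1 2 ∈ S := by
    simpa only [E3, single_mul_star_single_mul_single] using hS _ h11 _ h01 _ h02
  have h21 : E3 2 1 ∈ S := by
    simpa only [E3, single_mul_star_single_mul_single] using hS _ h22 _ h02 _ h01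
  refine zeroColSubmodule_le_of_single_mem fun i k hk => ?_
  fin_cases i <;> fin_cases k <;> first | exact absurd rfl hk | assumption

/-- Example 3.4: the triple system generated by `A` in `M₃(ℂ)` (the smallest subspace
containing `A` and closed under `x y* z`) is the 6-dimensional space of matrices with zero
first column (a copy of `M_{3,2}`). -/
theorem stmt16 (S : Submodule ℂ (Matrix (Fin 3) (Fin 3) ℂ))
    (hAS : (Aex : Set (Matrix (Fin 3) (Fin 3) ℂ)) ⊆ S)
    (hS : ∀ x ∈ S, ∀ y ∈ S, ∀ z ∈ S, x * star y * z ∈ S)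
    (hmin : ∀ S' : Submodule ℂ (Matrix (Fin 3) (Fin 3) ℂ),
      (Aex : Set (Matrix (Fin 3) (Fin 3) ℂ)) ⊆ S' →
      (∀ x ∈ S', ∀ y ∈ S', ∀ z ∈ S', x * star y * z ∈ S') → S ≤ S') :
    (S : Set (Matrix (Fin 3) (Fin 3) ℂ)) = {x : Matrix (Fin 3) (Fin 3) ℂ | ∀ i, x i 0 = 0} ∧
      Module.finrank ℂ ↥S = 6 := by
  have hS_eq : S = zeroColSubmodule ℂ (Fin 3) 0 :=
    le_antisymm (hmin _ Aex_le_zeroColSubmodule (zeroColSubmodule_isTripleSubsystem 0))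
      (zeroColSubmodule_le_of_Aex_le hAS hS)
  subst hS_eq
  exact ⟨Set.ext fun _ => mem_zeroColSubmodule, by simp [finrank_zeroColSubmodule]⟩
end
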